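/- arXiv:1407.6232 — 2 statements merged into one kernel-verified Lean document; each statement's English description precedes it below -/
import Mathlib

section
/- For every integer N ≥ 3, ∫_{ℝ^N} U(x)^{2(N−1)/(N−2)} dx = (2(N−1)/(N−2))·π^{(N+1)/2}·2^{1−N}·[N(N−2)]^{N/2} / Γ((N+1)/2). -/
open Real MeasureTheory

/-!
Raising `U` to the power `2(N-1)/(N-2)` gives `(c / (c + |x|²))^(N-1)` with `c = N(N-2)`.
Rescaling `x = √c y` and passing to polar coordinates reduces the integral to the one-dimensional
integral `∫₀^∞ r^(N-1) (1+r²)^(1-N) dr`, which the substitutions `u = r²` and `v = u/(1+u)`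
turn into the Beta integral `B(N/2, N/2-1)`. Legendre's duplication formula at `(N-1)/2` then
brings `Γ(N/2-1)/Γ(N-1)` into the stated form.
-/

/-- The Talenti instanton `U(x) = (N(N−2)/(N(N−2)+|x|²))^((N−2)/2)` on `ℝ^N`. -/
noncomputable def talenti (N : ℕ) (x : EuclideanSpace ℝ (Fin N)) : ℝ :=
  ((N : ℝ) * ((N : ℝ) - 2) / ((N : ℝ) * ((N : ℝ) - 2) + ‖x‖ ^ 2)) ^ (((N : ℝ) - 2) / 2)

open Set Module

namespace Real

theorem integral_Ioo_rpow_mul_one_sub_rpow {a b : ℝ} (ha : 0 < a) (hb : 0 < b) :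
    ∫ x in Ioo (0 : ℝ) 1, x ^ (a - 1) * (1 - x) ^ (b - 1) = Gamma a * Gamma b / Gamma (a + b) := by
  have hbeta := Complex.betaIntegral_eq_Gamma_mul_div a b (by simpa) (by simpa)
  rw [Complex.betaIntegral, intervalIntegral.integral_of_le zero_le_one,
    integral_Ioc_eq_integral_Ioo, ← Complex.ofReal_add, Complex.Gamma_ofReal,
    Complex.Gamma_ofReal, Complex.Gamma_ofReal] at hbeta
  refine Complex.ofReal_injective ?_
  push_cast
  rw [← hbeta, ← integral_complex_ofReal]
  refine setIntegral_congr_fun measurableSet_Ioo fun x ⟨hx0, hx1⟩ => ?_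
  push_cast
  rw [Complex.ofReal_cpow hx0.le, Complex.ofReal_cpow (sub_pos.2 hx1).le]
  push_cast
  rfl

theorem integral_Ioi_rpow_mul_one_add_rpow_neg {a b : ℝ} (ha : 0 < a) (hb : 0 < b) :
    ∫ u in Ioi (0 : ℝ), u ^ (a - 1) * (1 + u) ^ (-(a + b)) = Gamma a * Gamma b / Gamma (a + b) := by
  have hderiv : ∀ u ∈ Ioi (0 : ℝ),
      HasDerivWithinAt (fun u => u / (1 + u)) (((1 + u) ^ 2)⁻¹) (Ioi 0) u := by
    intro u hu
    have h1u : (1 : ℝ) + u ≠ 0 := by simp only [mem_Ioi] at hu; positivity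
    refine (((hasDerivAt_id' u).div ((hasDerivAt_id' u).const_add 1) h1u).hasDerivWithinAt
      ).congr_deriv ?_
    field_simp
    ring
  have hinj : InjOn (fun u : ℝ => u / (1 + u)) (Ioi 0) := by
    intro u hu v hv huv
    simp only [mem_Ioi] at hu hv
    field_simp at huv
    linarith
  have himage : (fun u : ℝ => u / (1 + u)) '' Ioi 0 = Ioo 0 1 := by
    ext s
    constructor
    · rintro ⟨u, hu, rfl⟩
      simp only [mem_Ioi] at hu
      exact ⟨by positivity, (div_lt_one (by linarith)).2 (by linarith)⟩
    · rintro ⟨hs0, hs1⟩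
      refine ⟨s / (1 - s), div_pos hs0 (sub_pos.2 hs1), ?_⟩
      field_simp [(sub_pos.2 hs1).ne']
      ring
  rw [← integral_Ioo_rpow_mul_one_sub_rpow ha hb, ← himage,
    integral_image_eq_integral_abs_deriv_smul measurableSet_Ioi hderiv hinj]
  refine setIntegral_congr_fun measurableSet_Ioi fun u (hu : 0 < u) => ?_
  have h1u : 0 < 1 + u := by linarith
  have hsub : 1 - u / (1 + u) = (1 + u)⁻¹ := by field_simp; ring
  rw [smul_eq_mul, abs_of_pos (by positivity), hsub, div_eq_mul_inv,
    mul_rpow hu.le (by positivity), ← rpow_neg_one, ← rpow_neg_one, ← rpow_natCast,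
    ← rpow_mul h1u.le, ← rpow_mul h1u.le, ← rpow_mul h1u.le,
    show -(a + b) = (Nat.cast 2 * -1) + (-1 * (a - 1) + -1 * (b - 1)) by push_cast; ring,
    rpow_add h1u, rpow_add h1u]
  ring

theorem integral_Ioi_rpow_mul_one_add_sq_rpow_neg {a b : ℝ} (ha : 0 < a) (hb : 0 < b) :
    ∫ t in Ioi (0 : ℝ), t ^ (2 * a - 1) * (1 + t ^ 2) ^ (-(a + b))
      = Gamma a * Gamma b / (2 * Gamma (a + b)) := by
  have h := integral_comp_rpow_Ioi_of_pos (p := 2) two_pos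
    (g := fun u => 2⁻¹ * (u ^ (a - 1) * (1 + u) ^ (-(a + b))))
  rw [integral_const_mul, integral_Ioi_rpow_mul_one_add_rpow_neg ha hb] at h
  rw [div_mul_eq_div_div_swap, div_eq_inv_mul _ (2 : ℝ), ← h]
  refine setIntegral_congr_fun measurableSet_Ioi fun t (ht : 0 < t) => ?_
  rw [smul_eq_mul, rpow_two, ← rpow_natCast, ← rpow_mul ht.le,
    show 2 * a - 1 = (2 - 1) + (Nat.cast 2 * (a - 1)) by push_cast; ring, rpow_add ht]
  push_cast
  ring

theorem Gamma_half_sub_one_div_Gamma_sub_one {x : ℝ} (hx : 2 < x) :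
    Gamma (x / 2 - 1) / Gamma (x - 1)
      = 2 * (x - 1) / (x - 2) * √π * 2 ^ (1 - x) / Gamma ((x + 1) / 2) := by
  have hdup : Gamma ((x - 1) / 2) * ((x / 2 - 1) * Gamma (x / 2 - 1))
      = Gamma (x - 1) * (2 * 2 ^ (1 - x)) * √π := by
    rw [← Gamma_add_one (by linarith), show x / 2 - 1 + 1 = (x - 1) / 2 + 1 / 2 by ring,
      Gamma_mul_Gamma_add_half, show 2 * ((x - 1) / 2) = x - 1 by ring,
      show 1 - (x - 1) = 1 + (1 - x) by ring, rpow_add two_pos, rpow_one]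
  have hshift : Gamma ((x + 1) / 2) = (x - 1) / 2 * Gamma ((x - 1) / 2) := by
    rw [← Gamma_add_one (by linarith)]
    ring_nf
  rw [div_eq_div_iff (Gamma_pos_of_pos (by linarith)).ne' (Gamma_pos_of_pos (by linarith)).ne',
    hshift]
  have hx2 : x - 2 ≠ 0 := by linarith
  generalize Gamma (x / 2 - 1) = A at *
  generalize Gamma ((x - 1) / 2) = B at *
  field_simp
  linear_combination 2 * (x - 1) * hdup

end Real

section InnerProductSpace

variable {E : Type*} [NormedAddCommGroup E] [InnerProductSpace ℝ E] [FiniteDimensional ℝ E]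
  [MeasurableSpace E] [BorelSpace E] [Nontrivial E]

theorem integral_rpow_neg_one_add_norm_sq {s : ℝ} (hs : (finrank ℝ E : ℝ) / 2 < s) :
    ∫ x : E, (1 + ‖x‖ ^ 2) ^ (-s)
      = π ^ ((finrank ℝ E : ℝ) / 2) * Gamma (s - finrank ℝ E / 2) / Gamma s := by
  set n := finrank ℝ E with hn_def
  have hn : 0 < (n : ℝ) := by exact_mod_cast finrank_pos
  have hradial : ∫ y in Ioi (0 : ℝ), y ^ (n - 1) • (1 + y ^ 2) ^ (-s)
      = Gamma (n / 2) * Gamma (s - n / 2) / (2 * Gamma s) := by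
    have h := integral_Ioi_rpow_mul_one_add_sq_rpow_neg (a := n / 2) (b := s - n / 2)
      (by positivity) (by linarith)
    rw [add_sub_cancel] at h
    rw [← h]
    refine setIntegral_congr_fun measurableSet_Ioi fun y _ => ?_
    rw [smul_eq_mul, ← rpow_natCast, Nat.cast_pred finrank_pos, mul_div_cancel₀ _ two_ne_zero]
  have hsqrt : √π ^ n = π ^ ((n : ℝ) / 2) := by
    rw [sqrt_eq_rpow, ← rpow_natCast, ← rpow_mul pi_pos.le]
    ring_nf
  rw [integral_fun_norm_addHaar volume (fun r => (1 + r ^ 2) ^ (-s)), measureReal_def,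
    InnerProductSpace.volume_ball, hradial, ENNReal.ofReal_one, one_pow, one_mul,
    ENNReal.toReal_ofReal (by positivity), hsqrt, Gamma_add_one (by positivity),
    nsmul_eq_mul, smul_eq_mul, ← hn_def]
  have := Gamma_pos_of_pos (show 0 < (n : ℝ) / 2 by positivity)
  field_simp

theorem integral_div_add_norm_sq_rpow {c s : ℝ} (hc : 0 < c) (hs : (finrank ℝ E : ℝ) / 2 < s) :
    ∫ x : E, (c / (c + ‖x‖ ^ 2)) ^ s
      = (π * c) ^ ((finrank ℝ E : ℝ) / 2) * Gamma (s - finrank ℝ E / 2) / Gamma s := by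
  have hscaled : ∀ x : E, (c / (c + ‖x‖ ^ 2)) ^ s = (1 + ‖(√c)⁻¹ • x‖ ^ 2) ^ (-s) := by
    intro x
    rw [norm_smul, mul_pow, norm_inv, norm_of_nonneg (sqrt_nonneg c), inv_pow, sq_sqrt hc.le,
      rpow_neg (by positivity), ← inv_rpow (by positivity)]
    congr 1
    field_simp
  have hsqrt : √c ^ finrank ℝ E = c ^ ((finrank ℝ E : ℝ) / 2) := by
    rw [sqrt_eq_rpow, ← rpow_natCast, ← rpow_mul hc.le]
    ring_nf
  simp_rw [hscaled]
  rw [Measure.integral_comp_inv_smul volume (fun y : E => (1 + ‖y‖ ^ 2) ^ (-s)),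
    integral_rpow_neg_one_add_norm_sq hs, hsqrt, abs_of_pos (by positivity), smul_eq_mul,
    mul_rpow pi_pos.le hc.le]
  ring

end InnerProductSpace

/-- `∫_{ℝ^N} U^{2(N−1)/(N−2)} = (2(N−1)/(N−2))·π^((N+1)/2)·2^(1−N)·[N(N−2)]^(N/2)/Γ((N+1)/2)`. -/
theorem stmt_8 (N : ℕ) (hN : 3 ≤ N) :
    ∫ x : EuclideanSpace ℝ (Fin N), talenti N x ^ (2 * ((N : ℝ) - 1) / ((N : ℝ) - 2))
      = (2 * ((N : ℝ) - 1) / ((N : ℝ) - 2)) * Real.pi ^ (((N : ℝ) + 1) / 2) * 2 ^ (1 - (N : ℝ))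
          * ((N : ℝ) * ((N : ℝ) - 2)) ^ ((N : ℝ) / 2) / Real.Gamma (((N : ℝ) + 1) / 2) := by
  have hN' : (3 : ℝ) ≤ N := by exact_mod_cast hN
  have hc : 0 < (N : ℝ) * (N - 2) := by nlinarith
  have : Nonempty (Fin N) := ⟨⟨0, by omega⟩⟩
  have hpow : ∀ x : EuclideanSpace ℝ (Fin N), talenti N x ^ (2 * ((N : ℝ) - 1) / ((N : ℝ) - 2))
      = ((N * (N - 2)) / (N * (N - 2) + ‖x‖ ^ 2)) ^ ((N : ℝ) - 1) := by
    intro x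
    rw [talenti, ← rpow_mul (by positivity)]
    congr 1
    field_simp [show (N : ℝ) - 2 ≠ 0 by linarith]
  have hpi : π ^ (((N : ℝ) + 1) / 2) = π ^ ((N : ℝ) / 2) * √π := by
    rw [sqrt_eq_rpow, ← rpow_add pi_pos]
    ring_nf
  simp_rw [hpow]
  rw [integral_div_add_norm_sq_rpow hc (by rw [finrank_euclideanSpace_fin]; linarith),
    finrank_euclideanSpace_fin,
    show (N : ℝ) - 1 - N / 2 = N / 2 - 1 by ring, mul_div_assoc,
    Real.Gamma_half_sub_one_div_Gamma_sub_one (by linarith), mul_rpow pi_pos.le hc.le, hpi]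
  ring
end

section
/- Let N ≥ 5 be an integer, let Ω ⊂ ℝ^N be a bounded open set, let R > 0, and let ρ : ℝ^{N−1} → ℝ be a twice continuously differentiable function with ρ(0) = 0 and derivative Dρ(0) = 0. Assume that Ω ∩ B_R(0) = { x ∈ B_R(0) : x_N > ρ(x₁,…,x_{N−1}) }, where B_R(0) is the open Euclidean ball of radius R centered at the origin. Then lim_{ε→0⁺} ε^{−1} ∫_Ω U_{ε,0}(x)^{2(N−1)/(N−2)} dx = (1/2) ∫_{ℝ^N} U(x)^{2(N−1)/(N−2)} dx. -/
/-! Writing `τ = 2(N-1)/(N-2)`, the substitution `x = εy` turns `ε⁻¹ ∫_Ω U_{ε,0}^τ` into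
`∫_{ε⁻¹Ω} U^τ`. As `ε → 0⁺` the dilates `ε⁻¹Ω` converge pointwise off the hyperplane `{y_N = 0}` to
the half-space `{y_N > 0}`, because the boundary graph is flat to first order at the origin; since
`U^τ ∼ |y|^{-2(N-1)}` is integrable, dominated convergence gives the limit `∫_{y_N > 0} U^τ`, which
is half of `∫ U^τ` by the reflection symmetry of the radial function `U`. -/

open Real MeasureTheory Filter

/-- The rescaled instanton centered at the origin, `U_{ε,0}(x) = ε^(−(N−2)/2)·U(x/ε)`. -/
noncomputable def talentiRescaled₀ (N : ℕ) (ε : ℝ) (x : EuclideanSpace ℝ (Fin N)) : ℝ :=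
  ε ^ (-(((N : ℝ) - 2) / 2)) * talenti N (ε⁻¹ • x)

open Pointwise Topology RealInnerProductSpace

section HalfSpace

variable {E : Type*} [NormedAddCommGroup E] [InnerProductSpace ℝ E]

lemma inner_reflection_orthogonal_singleton (e v : E) :
    ⟪e, (ℝ ∙ e)ᗮ.reflection v⟫ = -⟪e, v⟫ := by
  have h := (ℝ ∙ e)ᗮ.reflection.inner_map_map e v
  rw [Submodule.reflection_orthogonalComplement_singleton_eq_neg, inner_neg_left] at h
  linarith

variable [FiniteDimensional ℝ E] [MeasurableSpace E] [BorelSpace E]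

lemma ae_inner_ne_zero {e : E} (he : e ≠ 0) : ∀ᵐ y : E, ⟪e, y⟫ ≠ 0 := by
  have hker : {y : E | ⟪e, y⟫ = 0} = ((ℝ ∙ e)ᗮ : Submodule ℝ E) := by
    ext y; simp [Submodule.mem_orthogonal_singleton_iff_inner_right]
  refine (measure_eq_zero_iff_ae_notMem (s := {y : E | ⟪e, y⟫ = 0})).1 ?_
  rw [hker]
  refine Measure.addHaar_submodule volume _ fun htop => he ?_
  have : e ∈ (ℝ ∙ e)ᗮ := htop ▸ Submodule.mem_top
  exact inner_self_eq_zero.1 (Submodule.mem_orthogonal_singleton_iff_inner_right.1 this)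

/-- The reflection in `eᗮ` swaps the two half-spaces and fixes a radial function. -/
lemma setIntegral_inner_pos_eq_half {f : E → ℝ} (hf : Integrable f)
    (hrad : ∀ v w, ‖v‖ = ‖w‖ → f v = f w) {e : E} (he : e ≠ 0) :
    ∫ y in {y | 0 < ⟪e, y⟫}, f y = (1 / 2) * ∫ y, f y := by
  set H := {y : E | 0 < ⟪e, y⟫}
  set T := (ℝ ∙ e)ᗮ.reflection
  have hH : MeasurableSet H := measurableSet_lt measurable_const (by fun_prop)
  have hTH : T ⁻¹' H = {y | ⟪e, y⟫ < 0} := by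
    ext v; simp [H, T, inner_reflection_orthogonal_singleton]
  have hneg : ∫ y in {y | ⟪e, y⟫ < 0}, f y = ∫ y in H, f y := by
    rw [← hTH]
    calc ∫ y in T ⁻¹' H, f y = ∫ y in T ⁻¹' H, f (T y) :=
          setIntegral_congr_fun (hH.preimage T.continuous.measurable)
            fun v _ => hrad _ _ (T.norm_map v).symm
      _ = ∫ y in H, f y :=
          T.measurePreserving.setIntegral_preimage_emb T.toMeasurableEquiv.measurableEmbedding _ _
  have hcompl : (Hᶜ : Set E) =ᵐ[volume] {y | ⟪e, y⟫ < 0} := by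
    filter_upwards [ae_inner_ne_zero he] with y hy
    exact propext (show ¬0 < ⟪e, y⟫ ↔ ⟪e, y⟫ < 0 by rw [not_lt, hy.le_iff_lt])
  have hsplit := integral_add_compl hH hf
  rw [setIntegral_congr_set hcompl, hneg] at hsplit
  linarith

end HalfSpace

lemma tendsto_setIntegral_of_ae_eventually_mem_iff {α ι G : Type*} [MeasurableSpace α]
    [NormedAddCommGroup G] [NormedSpace ℝ G] {μ : Measure α} {l : Filter ι}
    [l.IsCountablyGenerated] {f : α → G} (hf : Integrable f μ) {s : ι → Set α} {t : Set α}
    (hs : ∀ᶠ i in l, MeasurableSet (s i)) (ht : MeasurableSet t)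
    (hst : ∀ᵐ x ∂μ, ∀ᶠ i in l, (x ∈ s i ↔ x ∈ t)) :
    Tendsto (fun i => ∫ x in s i, f x ∂μ) l (𝓝 (∫ x in t, f x ∂μ)) := by
  have hind : Tendsto (fun i => ∫ x, (s i).indicator f x ∂μ) l (𝓝 (∫ x, t.indicator f x ∂μ)) := by
    refine tendsto_integral_filter_of_dominated_convergence (fun x => ‖f x‖) ?_ ?_ hf.norm ?_
    · filter_upwards [hs] with i hi using hf.aestronglyMeasurable.indicator hi
    · exact Eventually.of_forall fun i => Eventually.of_forall fun x => norm_indicator_le_norm_self _ _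
    · filter_upwards [hst] with x hx
      refine tendsto_const_nhds.congr' ?_
      filter_upwards [hx] with i hi
      by_cases hxt : x ∈ t
      · simp [hxt, hi.2 hxt]
      · simp [hxt, mt hi.1 hxt]
  rw [integral_indicator ht] at hind
  refine hind.congr' ?_
  filter_upwards [hs] with i hi using integral_indicator hi

section BlowUp

variable {E F : Type*} [NormedAddCommGroup E] [NormedSpace ℝ E] [NormedAddCommGroup F]
  [NormedSpace ℝ F]

lemma tendsto_div_nhdsNE_of_hasFDerivAt_zero {ρ : F → ℝ} (hρ0 : ρ 0 = 0)
    (hdρ : HasFDerivAt ρ (0 : F →L[ℝ] ℝ) 0) (v : F) :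
    Tendsto (fun t : ℝ => ρ (t • v) / t) (𝓝[≠] 0) (𝓝 0) := by
  have hd : HasDerivAt (fun t : ℝ => ρ (t • v)) 0 0 := by
    have h := hdρ.comp_hasDerivAt_of_eq (0 : ℝ) ((hasDerivAt_id (0 : ℝ)).smul_const v)
      (zero_smul ℝ v).symm
    rwa [zero_apply] at h
  refine (hasDerivAt_iff_tendsto_slope.1 hd).congr fun t => ?_
  simp [slope_def_field, hρ0]

/-- Since `ρ (t • v) / t → 0`, for small `t > 0` the sign of `ℓ (t • y) - ρ (P (t • y))` is the
sign of `ℓ y`. -/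
lemma eventually_smul_mem_iff_of_inter_ball_eq {Ω : Set E} {R : ℝ} (hR : 0 < R)
    {P : E → F} (hP : ∀ (c : ℝ) x, P (c • x) = c • P x)
    {ℓ : E → ℝ} (hℓ : ∀ (c : ℝ) x, ℓ (c • x) = c * ℓ x)
    {ρ : F → ℝ} (hρ0 : ρ 0 = 0) (hdρ : HasFDerivAt ρ (0 : F →L[ℝ] ℝ) 0)
    (hΩ : Ω ∩ Metric.ball 0 R = {x ∈ Metric.ball 0 R | ρ (P x) < ℓ x}) {y : E} (hy : ℓ y ≠ 0) :
    ∀ᶠ t in 𝓝[>] (0 : ℝ), (t • y ∈ Ω ↔ 0 < ℓ y) := by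
  have hslope : Tendsto (fun t : ℝ => |ρ (t • P y) / t|) (𝓝[>] 0) (𝓝 0) := by
    simpa using ((tendsto_div_nhdsNE_of_hasFDerivAt_zero hρ0 hdρ (P y)).mono_left
      (nhdsGT_le_nhdsNE 0)).abs
  have hball : ∀ᶠ t in 𝓝[>] (0 : ℝ), t • y ∈ Metric.ball 0 R :=
    (((continuous_id.smul continuous_const).tendsto' 0 0 (zero_smul ℝ y)).mono_left
      nhdsWithin_le_nhds).eventually_mem (Metric.ball_mem_nhds 0 hR)
  filter_upwards [hslope.eventually_lt_const (abs_pos.2 hy), hball,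
    self_mem_nhdsWithin] with t hρt hty (ht : 0 < t)
  have hmem : t • y ∈ Ω ↔ ρ (t • P y) / t < ℓ y := by
    rw [← and_iff_left (a := t • y ∈ Ω) hty, ← Set.mem_inter_iff, hΩ, div_lt_iff₀ ht,
      Set.mem_ofPred_eq, and_iff_right hty, hP, hℓ, mul_comm]
  rw [hmem]
  obtain ⟨hlo, hhi⟩ := abs_lt.1 hρt
  rcases hy.lt_or_gt with hneg | hpos
  · rw [abs_of_neg hneg] at hlo
    exact iff_of_false (by linarith) (by linarith)
  · rw [abs_of_pos hpos] at hhi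
    exact iff_of_true hhi hpos

end BlowUp

section Talenti

variable {N : ℕ}

lemma talenti_base_pos (hN : 3 ≤ N) (x : EuclideanSpace ℝ (Fin N)) :
    0 < (N : ℝ) * ((N : ℝ) - 2) / ((N : ℝ) * ((N : ℝ) - 2) + ‖x‖ ^ 2) := by
  have h3 : (3 : ℝ) ≤ N := by exact_mod_cast hN
  have hc : (0 : ℝ) < (N : ℝ) * ((N : ℝ) - 2) := by nlinarith
  positivity

lemma talenti_nonneg (hN : 3 ≤ N) (x : EuclideanSpace ℝ (Fin N)) : 0 ≤ talenti N x :=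
  rpow_nonneg (talenti_base_pos hN x).le _

lemma talenti_rpow_eq (hN : 3 ≤ N) (x : EuclideanSpace ℝ (Fin N)) :
    talenti N x ^ (2 * ((N : ℝ) - 1) / ((N : ℝ) - 2))
      = ((N : ℝ) * ((N : ℝ) - 2) / ((N : ℝ) * ((N : ℝ) - 2) + ‖x‖ ^ 2)) ^ ((N : ℝ) - 1) := by
  have h3 : (3 : ℝ) ≤ N := by exact_mod_cast hN
  rw [talenti, ← rpow_mul (talenti_base_pos hN x).le]
  congr 1
  field_simp [show (N : ℝ) - 2 ≠ 0 by linarith]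

lemma integrable_talenti_rpow (hN : 3 ≤ N) :
    Integrable fun x : EuclideanSpace ℝ (Fin N) =>
      talenti N x ^ (2 * ((N : ℝ) - 1) / ((N : ℝ) - 2)) := by
  have h3 : (3 : ℝ) ≤ N := by exact_mod_cast hN
  set c : ℝ := (N : ℝ) * ((N : ℝ) - 2)
  have hc : 1 ≤ c := by nlinarith
  have hdim : (Module.finrank ℝ (EuclideanSpace ℝ (Fin N)) : ℝ) < 2 * ((N : ℝ) - 1) := by
    rw [finrank_euclideanSpace_fin]; linarith
  refine ((integrable_rpow_neg_one_add_norm_sq hdim).const_mul (c ^ ((N : ℝ) - 1))).mono' ?_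
    (Eventually.of_forall fun x => ?_)
  · exact (by unfold talenti; fun_prop : Measurable _).aestronglyMeasurable
  · rw [norm_of_nonneg (rpow_nonneg (talenti_nonneg hN x) _), talenti_rpow_eq hN x,
      show -(2 * ((N : ℝ) - 1)) / 2 = -((N : ℝ) - 1) by ring, rpow_neg (by positivity),
      ← div_eq_mul_inv, ← div_rpow (by linarith) (by positivity)]
    exact rpow_le_rpow (talenti_base_pos hN x).le
      (div_le_div_of_nonneg_left (by linarith) (by positivity) (by linarith)) (by linarith)

lemma talentiRescaled₀_rpow (hN : 3 ≤ N) {ε : ℝ} (hε : 0 < ε) (x : EuclideanSpace ℝ (Fin N)) :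
    talentiRescaled₀ N ε x ^ (2 * ((N : ℝ) - 1) / ((N : ℝ) - 2))
      = ε ^ (-((N : ℝ) - 1)) * talenti N (ε⁻¹ • x) ^ (2 * ((N : ℝ) - 1) / ((N : ℝ) - 2)) := by
  have h3 : (3 : ℝ) ≤ N := by exact_mod_cast hN
  rw [talentiRescaled₀, mul_rpow (rpow_nonneg hε.le _) (talenti_nonneg hN _), ← rpow_mul hε.le]
  congr 2
  field_simp [show (N : ℝ) - 2 ≠ 0 by linarith]

lemma inv_mul_setIntegral_talentiRescaled₀_rpow (hN : 3 ≤ N) {ε : ℝ} (hε : 0 < ε)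
    (Ω : Set (EuclideanSpace ℝ (Fin N))) :
    ε⁻¹ * ∫ x in Ω, talentiRescaled₀ N ε x ^ (2 * ((N : ℝ) - 1) / ((N : ℝ) - 2))
      = ∫ y in ε⁻¹ • Ω, talenti N y ^ (2 * ((N : ℝ) - 1) / ((N : ℝ) - 2)) := by
  simp only [talentiRescaled₀_rpow hN hε]
  rw [integral_const_mul, Measure.setIntegral_comp_smul_of_pos volume
      (fun y => talenti N y ^ (2 * ((N : ℝ) - 1) / ((N : ℝ) - 2))) Ω (inv_pos.2 hε),
    finrank_euclideanSpace_fin, inv_pow, inv_inv, smul_eq_mul, ← mul_assoc, ← mul_assoc]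
  have hpow : ε⁻¹ * ε ^ (-((N : ℝ) - 1)) * ε ^ N = 1 := by
    rw [← rpow_natCast, ← rpow_neg_one, ← rpow_add hε, ← rpow_add hε,
      show -1 + -((N : ℝ) - 1) + N = 0 by ring, rpow_zero]
  rw [hpow, one_mul]

end Talenti

/-- Appendix B of the paper: for a bounded open set `Ω` whose boundary near the origin is the
graph `x_N = ρ(x′)` of a `C²` function with `ρ(0) = 0`, `Dρ(0) = 0`, one has
`ε⁻¹·∫_Ω U_{ε,0}^(2(N−1)/(N−2)) → (1/2)·∫_{ℝ^N} U^(2(N−1)/(N−2))` as `ε → 0⁺`. -/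
theorem stmt_18 (N : ℕ) (hN : 5 ≤ N) (Ω : Set (EuclideanSpace ℝ (Fin N)))
    (hΩo : IsOpen Ω) (R : ℝ) (hR : 0 < R)
    (ρ : EuclideanSpace ℝ (Fin (N - 1)) → ℝ) (hρ : ContDiff ℝ 2 ρ)
    (hρ0 : ρ 0 = 0) (hdρ0 : fderiv ℝ ρ 0 = 0)
    (hgraph : Ω ∩ Metric.ball (0 : EuclideanSpace ℝ (Fin N)) R
      = {x ∈ Metric.ball (0 : EuclideanSpace ℝ (Fin N)) R |
          ρ (WithLp.toLp 2 (fun i : Fin (N - 1) => x (Fin.castLE (Nat.sub_le N 1) i))) < x ⟨N - 1, by omega⟩}) :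
    Tendsto
      (fun ε : ℝ =>
        ε⁻¹ * ∫ x in Ω, talentiRescaled₀ N ε x ^ (2 * ((N : ℝ) - 1) / ((N : ℝ) - 2)))
      (nhdsWithin (0 : ℝ) (Set.Ioi 0))
      (nhds ((1 / 2) *
        ∫ x : EuclideanSpace ℝ (Fin N), talenti N x ^ (2 * ((N : ℝ) - 1) / ((N : ℝ) - 2)))) := by
  have hN3 : 3 ≤ N := by omega
  have hint := integrable_talenti_rpow hN3
  set n : Fin N := ⟨N - 1, by omega⟩
  set e : EuclideanSpace ℝ (Fin N) := EuclideanSpace.single n 1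
  have he0 : e ≠ 0 := by simp [e]
  have he : ∀ y, ⟪e, y⟫ = y n := fun y => by simp [e, EuclideanSpace.inner_single_left]
  have hdρ : HasFDerivAt ρ (0 : _ →L[ℝ] ℝ) 0 :=
    hdρ0 ▸ (hρ.differentiable (by norm_num) 0).hasFDerivAt
  have hblowup : ∀ᵐ y, ∀ᶠ ε in 𝓝[>] (0 : ℝ), (y ∈ ε⁻¹ • Ω ↔ y ∈ {y | 0 < ⟪e, y⟫}) := by
    filter_upwards [ae_inner_ne_zero he0] with y hy
    rw [he] at hy
    filter_upwards [eventually_smul_mem_iff_of_inter_ball_eq hR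
      (P := fun x : EuclideanSpace ℝ (Fin N) =>
        WithLp.toLp 2 fun i : Fin (N - 1) => x (Fin.castLE (Nat.sub_le N 1) i))
      (ℓ := fun x : EuclideanSpace ℝ (Fin N) => x n) (fun c x => rfl) (fun c x => rfl)
      hρ0 hdρ hgraph hy, self_mem_nhdsWithin] with ε hε (hεpos : 0 < ε)
    rw [Set.mem_smul_set_iff_inv_smul_mem₀ (inv_ne_zero hεpos.ne'), inv_inv, hε]
    exact (he y).symm ▸ Iff.rfl
  have hmeas : ∀ᶠ ε in 𝓝[>] (0 : ℝ), MeasurableSet (ε⁻¹ • Ω) := by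
    filter_upwards [self_mem_nhdsWithin] with ε (hε : 0 < ε)
    exact (hΩo.smul₀ (inv_ne_zero hε.ne')).measurableSet
  have hlim := tendsto_setIntegral_of_ae_eventually_mem_iff hint hmeas
    (measurableSet_lt measurable_const (by fun_prop)) hblowup
  rw [setIntegral_inner_pos_eq_half hint (fun v w h => by simp only [talenti, h]) he0]
    at hlim
  refine hlim.congr' ?_
  filter_upwards [self_mem_nhdsWithin] with ε hε
  exact (inv_mul_setIntegral_talentiRescaled₀_rpow hN3 hε Ω).symm
end
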